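/- arXiv:1707.06634 — 2 statements merged into one kernel-verified Lean document; each statement's English description precedes it below -/
import Mathlib

section
/- In the symmetric group Sym_{n+1}, if σ₁σ₂⋯σ_k = σ is a reduced factorization (reflection lengths add) of a permutation σ into cyclic permutations σᵢ, then the hypergraph whose hyperedges are the supports of the σᵢ is a hyperforest. -/
/-- An alternating path in a hypergraph: a list of vertices and a list of hyperedges,
with each hyperedge belonging to the hypergraph and containing the two vertices around it. -/
def IsHyperPath {V : Type*} (E : Finset (Finset V)) : List V → List (Finset V) → Prop
  | [_], [] => True
  | u :: v :: vs, e :: es => e ∈ E ∧ u ∈ e ∧ v ∈ e ∧ IsHyperPath E (v :: vs) es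
  | _, _ => False

/-- Two vertices are joined by a path in the hypergraph. -/
def Reachable {V : Type*} (E : Finset (Finset V)) (u v : V) : Prop :=
  ∃ vs es, IsHyperPath E vs es ∧ vs.head? = some u ∧ vs.getLast? = some v

/-- Every pair of vertices is joined by a path. -/
def Connected {V : Type*} (E : Finset (Finset V)) : Prop := ∀ u v, Reachable E u v

/-- A nontrivial simple cycle: a closed path of length at least two with distinct
hyperedges and distinct vertices except that the endpoints are equal. -/
def HasSimpleCycle {V : Type*} (E : Finset (Finset V)) : Prop :=
  ∃ (vs : List V) (es : List (Finset V)), IsHyperPath E vs es ∧ 2 ≤ es.length ∧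
    es.Nodup ∧ vs.dropLast.Nodup ∧ vs.head? = vs.getLast?

/-- A hyperforest: hyperedges have size at least two and there are no nontrivial simple cycles. -/
def IsHyperforest {V : Type*} (E : Finset (Finset V)) : Prop :=
  (∀ e ∈ E, 2 ≤ e.card) ∧ ¬ HasSimpleCycle E

/-- A hypertree is a connected hyperforest. -/
def IsHypertree {V : Type*} (E : Finset (Finset V)) : Prop := IsHyperforest E ∧ Connected E

/-- The irreducible permutation of a hyperedge: the cycle through its elements in increasing order. -/
def edgePerm {m : ℕ} (e : Finset (Fin m)) : Equiv.Perm (Fin m) :=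
  (e.sort (· ≤ ·)).formPerm

/-- The reflection (absolute) length of a permutation: the minimal number of
transpositions whose product is the permutation. -/
noncomputable def reflLen {α : Type*} [DecidableEq α] (σ : Equiv.Perm α) : ℕ :=
  sInf {k | ∃ l : List (Equiv.Perm α), l.prod = σ ∧ l.length = k ∧ ∀ t ∈ l, t.IsSwap}

/-!
For a permutation `σ` of `α` let `M(σ) ⊆ K^α` be the span of the vectors `e_{σx} - e_x`.
Its dimension is the reflection length of `σ`: a transposition contributes at most one
dimension, while `swap x (σ x) * σ` fixes `x`, so its moved space lies in the hyperplane
`v x = 0`, which misses `e_{σx} - e_x` and drops the dimension by one.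
Since `M(σ₁ ⋯ σ_k) ≤ M(σ₁) ⊔ ⋯ ⊔ M(σ_k)`, a reduced factorization makes this sum direct.
On the support of a cycle `τ` all differences `e_a - e_b` lie in `M(τ)`, so a simple cycle of
hyperedges through `supp σ₁` yields distinct `u, v ∈ supp σ₁` with `e_u - e_v` in both `M(σ₁)`
and the sum of the other `M(σⱼ)`.
-/

open Equiv Equiv.Perm Module

section HyperPath

variable {V : Type*} {E : Finset (Finset V)}

theorem IsHyperPath.erase [DecidableEq V] {e : Finset V} :
    ∀ {vs : List V} {es : List (Finset V)}, IsHyperPath E vs es → e ∉ es →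
      IsHyperPath (E.erase e) vs es
  | [_], [], _, _ => trivial
  | _ :: _ :: _, _ :: _, ⟨he', hu, hv, hp⟩, he =>
    ⟨Finset.mem_erase.mpr ⟨fun h => he (h ▸ List.mem_cons_self), he'⟩, hu, hv,
      hp.erase fun h => he (List.mem_cons_of_mem _ h)⟩

theorem IsHyperPath.sub_mem {M : Type*} [AddCommGroup M] (f : V → M) {S : AddSubgroup M}
    (hE : ∀ e ∈ E, ∀ a ∈ e, ∀ b ∈ e, f a - f b ∈ S) :
    ∀ {vs : List V} {es : List (Finset V)} {u w : V}, IsHyperPath E vs es →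
      vs.head? = some u → vs.getLast? = some w → f w - f u ∈ S
  | [_], [], _, _, _, hu, hw => by simp_all
  | u :: v :: vs, _ :: _, _, _, ⟨he, hue, hve, hp⟩, hu, hw => by
    obtain rfl := Option.some_inj.mp hu
    rw [List.getLast?_cons_cons] at hw
    simpa using S.add_mem (hE _ he v hve u hue) (hp.sub_mem f hE rfl hw)

theorem Reachable.sub_mem {M : Type*} [AddCommGroup M] (f : V → M) {S : AddSubgroup M}
    (hE : ∀ e ∈ E, ∀ a ∈ e, ∀ b ∈ e, f a - f b ∈ S) {u w : V} (h : Reachable E u w) :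
    f w - f u ∈ S :=
  let ⟨_, _, hp, hu, hw⟩ := h
  hp.sub_mem f hE hu hw

theorem HasSimpleCycle.exists_reachable_erase [DecidableEq V] (h : HasSimpleCycle E) :
    ∃ e ∈ E, ∃ u ∈ e, ∃ v ∈ e, u ≠ v ∧ Reachable (E.erase e) v u := by
  obtain ⟨vs, es, hp, hlen, hes, hvs, hcl⟩ := h
  rcases es with _ | ⟨e, _ | ⟨e', es⟩⟩
  iterate 2 simp at hlen
  rcases vs with _ | ⟨u, _ | ⟨v, _ | ⟨w, t⟩⟩⟩
  iterate 3 simp [IsHyperPath] at hp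
  obtain ⟨he, hu, hv, hp⟩ := hp
  have huv : u ≠ v := by
    rw [List.dropLast_cons_cons, List.dropLast_cons_cons] at hvs
    exact fun h => (List.nodup_cons.mp hvs).1 (h ▸ List.mem_cons_self)
  refine ⟨e, he, u, hu, v, hv, huv, v :: w :: t, e' :: es,
    hp.erase (List.nodup_cons.mp hes).1, rfl, ?_⟩
  rw [← List.getLast?_cons_cons (a := u), ← hcl]
  rfl

end HyperPath

namespace Submodule

variable {K V ι : Type*} [DivisionRing K] [AddCommGroup V] [Module K V] [FiniteDimensional K V]

theorem finrank_biSup_list_le (f : ι → Submodule K V) (l : List ι) :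
    finrank K ↥(⨆ i ∈ l, f i) ≤ (l.map fun i => finrank K (f i)).sum := by
  induction l with
  | nil => simp
  | cons a l ih =>
    have hcons : ⨆ i ∈ a :: l, f i = f a ⊔ ⨆ i ∈ l, f i := by
      simp only [List.mem_cons, iSup_or, iSup_sup_eq, iSup_iSup_eq_left]
    rw [hcons, List.map_cons, List.sum_cons]
    exact (finrank_add_le_finrank_add_finrank _ _).trans (Nat.add_le_add_left ih _)

theorem finrank_biSup_list_lt [DecidableEq ι] (f : ι → Submodule K V) {l : List ι} {j : ι}
    (hj : j ∈ l) (h : f j ⊓ ⨆ i ∈ l.erase j, f i ≠ ⊥) :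
    finrank K ↥(⨆ i ∈ l, f i) < (l.map fun i => finrank K (f i)).sum := by
  have hsplit : ⨆ i ∈ l, f i = f j ⊔ ⨆ i ∈ l.erase j, f i := by
    refine le_antisymm (iSup₂_le fun i hi => ?_) (sup_le (le_biSup f hj) ?_)
    · rcases eq_or_ne i j with rfl | hij
      · exact le_sup_left
      · exact le_sup_of_le_right (le_biSup f ((List.mem_erase_of_ne hij).mpr hi))
    · exact iSup₂_mono' fun i hi => ⟨i, List.mem_of_mem_erase hi, le_rfl⟩
  have hinf := one_le_finrank_iff.mpr h
  have hmod := finrank_sup_add_finrank_inf_eq (f j) (⨆ i ∈ l.erase j, f i)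
  have hrest := finrank_biSup_list_le f (l.erase j)
  rw [← List.sum_map_erase _ hj, hsplit]
  omega

end Submodule

namespace Equiv.Perm

variable {α K : Type*} [DecidableEq α] [Field K]

variable (K) in
def movedSpace (σ : Perm α) : Submodule K (α → K) :=
  Submodule.span K (Set.range fun x => Pi.single (σ x) 1 - Pi.single x 1)

theorem single_apply_sub_single_mem_movedSpace (σ : Perm α) (x : α) :
    Pi.single (σ x) 1 - Pi.single x 1 ∈ movedSpace K σ :=
  Submodule.subset_span ⟨x, rfl⟩

theorem single_pow_apply_sub_single_mem_movedSpace (σ : Perm α) (x : α) :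
    ∀ i : ℕ, Pi.single ((σ ^ i) x) 1 - Pi.single x 1 ∈ movedSpace K σ
  | 0 => by simp
  | i + 1 => by
    rw [← sub_add_sub_cancel _ (Pi.single ((σ ^ i) x) (1 : K)), pow_succ', mul_apply]
    exact add_mem (single_apply_sub_single_mem_movedSpace σ _)
      (single_pow_apply_sub_single_mem_movedSpace σ x i)

theorem IsCycle.single_sub_single_mem_movedSpace [Fintype α] {σ : Perm α} (hσ : σ.IsCycle)
    {x y : α} (hx : x ∈ σ.support) (hy : y ∈ σ.support) :
    Pi.single x 1 - Pi.single y 1 ∈ movedSpace K σ := by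
  obtain ⟨i, rfl⟩ := hσ.exists_pow_eq (mem_support.mp hy) (mem_support.mp hx)
  exact single_pow_apply_sub_single_mem_movedSpace σ y i

theorem movedSpace_one : movedSpace K (1 : Perm α) = ⊥ := by
  simp [movedSpace]

theorem movedSpace_mul_le (σ τ : Perm α) :
    movedSpace K (σ * τ) ≤ movedSpace K σ ⊔ movedSpace K τ := by
  refine Submodule.span_le.mpr (Set.range_subset_iff.mpr fun x => ?_)
  rw [mul_apply, ← sub_add_sub_cancel _ (Pi.single (τ x) (1 : K))]
  exact Submodule.add_mem_sup (single_apply_sub_single_mem_movedSpace σ _)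
    (single_apply_sub_single_mem_movedSpace τ x)

theorem movedSpace_list_prod_le {L : List (Perm α)} {S : Submodule K (α → K)}
    (h : ∀ τ ∈ L, movedSpace K τ ≤ S) : movedSpace K L.prod ≤ S := by
  induction L with
  | nil => simp [movedSpace_one]
  | cons τ L ih =>
    rw [List.prod_cons]
    exact (movedSpace_mul_le τ L.prod).trans <| sup_le (h τ List.mem_cons_self)
      (ih fun τ' hτ' => h τ' (List.mem_cons_of_mem _ hτ'))

theorem movedSpace_swap_le (x y : α) :
    movedSpace K (swap x y) ≤ K ∙ (Pi.single x 1 - Pi.single y 1) := by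
  refine Submodule.span_le.mpr ?_
  rintro _ ⟨z, rfl⟩
  simp only [SetLike.mem_coe, Submodule.mem_span_singleton]
  rcases eq_or_ne z x with rfl | hzx
  · exact ⟨-1, by simp⟩
  rcases eq_or_ne z y with rfl | hzy
  · exact ⟨1, by simp⟩
  · exact ⟨0, by simp [swap_apply_of_ne_of_ne hzx hzy]⟩

theorem movedSpace_le_ker_proj {σ : Perm α} {x : α} (hx : σ x = x) :
    movedSpace K σ ≤ LinearMap.ker (LinearMap.proj x) := by
  refine Submodule.span_le.mpr (Set.range_subset_iff.mpr fun y => ?_)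
  have : x = σ y ↔ x = y := ⟨fun h => σ.injective (hx.trans h), fun h => h ▸ hx.symm⟩
  simp [Pi.single_apply, this]

theorem movedSpace_swap_mul_lt {σ : Perm α} {x : α} (hx : σ x ≠ x) :
    movedSpace K (swap x (σ x) * σ) < movedSpace K σ := by
  have hgen := single_apply_sub_single_mem_movedSpace (K := K) σ x
  refine SetLike.lt_iff_le_and_exists.mpr ⟨?_, _, hgen, fun hmem => ?_⟩
  · refine (movedSpace_mul_le _ σ).trans (sup_le ?_ le_rfl)
    refine (movedSpace_swap_le x (σ x)).trans ((Submodule.span_singleton_le_iff_mem _ _).mpr ?_)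
    rw [← neg_sub]
    exact neg_mem hgen
  · have := movedSpace_le_ker_proj (K := K) (swap_apply_right x (σ x)) hmem
    simp [hx] at this

end Equiv.Perm

section ReflectionLength

variable {α : Type*} [DecidableEq α]

theorem reflLen_le_length {σ : Perm α} {L : List (Perm α)} (hL : L.prod = σ)
    (hswap : ∀ t ∈ L, t.IsSwap) : reflLen σ ≤ L.length :=
  Nat.sInf_le ⟨L, hL, rfl, hswap⟩

variable [Fintype α]

theorem exists_swap_list_length_eq_reflLen (σ : Perm α) :
    ∃ L : List (Perm α), L.prod = σ ∧ L.length = reflLen σ ∧ ∀ t ∈ L, t.IsSwap := by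
  obtain ⟨L, hL, hswap⟩ := (truncSwapFactors σ).out
  exact Nat.sInf_mem
    (s := {k | ∃ L : List (Perm α), L.prod = σ ∧ L.length = k ∧ ∀ t ∈ L, t.IsSwap})
    ⟨L.length, L, hL, rfl, hswap⟩

theorem reflLen_swap_mul_le {x y : α} (hxy : x ≠ y) (σ : Perm α) :
    reflLen (swap x y * σ) ≤ reflLen σ + 1 := by
  obtain ⟨L, hL, hlen, hswap⟩ := exists_swap_list_length_eq_reflLen σ
  refine (reflLen_le_length (L := swap x y :: L) (by rw [List.prod_cons, hL]) ?_).trans ?_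
  · exact List.forall_mem_cons.mpr ⟨⟨x, y, hxy, rfl⟩, hswap⟩
  · simp [hlen]

variable (K : Type*) [Field K]

theorem finrank_movedSpace_le_reflLen (σ : Perm α) :
    finrank K (movedSpace K σ) ≤ reflLen σ := by
  obtain ⟨L, rfl, hlen, hswap⟩ := exists_swap_list_length_eq_reflLen σ
  rw [← hlen]
  clear hlen
  induction L with
  | nil => rw [List.prod_nil, movedSpace_one]; simp
  | cons t L ih =>
    obtain ⟨x, y, -, rfl⟩ := hswap t List.mem_cons_self
    have hswap_le : finrank K (movedSpace K (swap x y)) ≤ 1 :=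
      (Submodule.finrank_mono (movedSpace_swap_le x y)).trans
        ((finrank_span_le_card _).trans (by simp))
    calc finrank K (movedSpace K (swap x y * L.prod))
        ≤ finrank K ↥(movedSpace K (swap x y) ⊔ movedSpace K L.prod) :=
          Submodule.finrank_mono (movedSpace_mul_le _ _)
      _ ≤ 1 + L.length :=
          (Submodule.finrank_add_le_finrank_add_finrank _ _).trans
            (add_le_add hswap_le (ih fun t ht => hswap t (List.mem_cons_of_mem _ ht)))
      _ = (swap x y :: L).length := by simp [add_comm]

theorem reflLen_le_finrank_movedSpace (σ : Perm α) :
    reflLen σ ≤ finrank K (movedSpace K σ) := by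
  by_cases hσ : σ = 1
  · subst hσ
    exact (reflLen_le_length (L := []) rfl (by simp)).trans (Nat.zero_le _)
  obtain ⟨x, hx⟩ : ∃ x, σ x ≠ x := not_forall.mp fun h => hσ (Perm.ext h)
  have := card_support_swap_mul hx
  calc reflLen σ = reflLen (swap x (σ x) * (swap x (σ x) * σ)) := by rw [swap_mul_self_mul]
    _ ≤ reflLen (swap x (σ x) * σ) + 1 := reflLen_swap_mul_le hx.symm _
    _ ≤ finrank K (movedSpace K (swap x (σ x) * σ)) + 1 :=
        Nat.add_le_add_right (reflLen_le_finrank_movedSpace _) 1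
    _ ≤ finrank K (movedSpace K σ) :=
        Submodule.finrank_lt_finrank_of_lt (movedSpace_swap_mul_lt hx)
termination_by σ.support.card

theorem reflLen_eq_finrank_movedSpace (σ : Perm α) :
    reflLen σ = finrank K (movedSpace K σ) :=
  (reflLen_le_finrank_movedSpace K σ).antisymm (finrank_movedSpace_le_reflLen K σ)

end ReflectionLength

theorem movedSpace_inf_biSup_erase_eq_bot {α : Type*} [Fintype α] [DecidableEq α]
    (K : Type*) [Field K] {l : List (Perm α)} {σ : Perm α}
    (hprod : l.prod = σ) (hred : (l.map reflLen).sum = reflLen σ) {τ : Perm α} (hτ : τ ∈ l) :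
    movedSpace K τ ⊓ ⨆ τ' ∈ l.erase τ, movedSpace K τ' = ⊥ := by
  by_contra h
  have hσ : movedSpace K σ ≤ ⨆ τ' ∈ l, movedSpace K τ' :=
    hprod ▸ movedSpace_list_prod_le fun τ' hτ' => le_biSup (movedSpace K) hτ'
  have hlt : reflLen σ < reflLen σ :=
    calc reflLen σ = finrank K (movedSpace K σ) := reflLen_eq_finrank_movedSpace K σ
      _ ≤ finrank K ↥(⨆ τ' ∈ l, movedSpace K τ') := Submodule.finrank_mono hσ
      _ < (l.map fun τ' => finrank K (movedSpace K τ')).sum :=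
          Submodule.finrank_biSup_list_lt _ hτ h
      _ = reflLen σ := by simp_rw [← reflLen_eq_finrank_movedSpace K]; exact hred
  exact lt_irrefl _ hlt

/-- The product `σ₁σ₂⋯σ_k` is read left to right, which is `l.reverse.prod` in Mathlib's
convention. -/
theorem stmt11 (n : ℕ) (σ : Equiv.Perm (Fin (n + 1)))
    (l : List (Equiv.Perm (Fin (n + 1)))) (hcyc : ∀ τ ∈ l, τ.IsCycle)
    (hprod : l.reverse.prod = σ) (hred : (l.map reflLen).sum = reflLen σ) :
    IsHyperforest (l.map Equiv.Perm.support).toFinset := by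
  classical
  refine ⟨fun e he => ?_, fun hcycle => ?_⟩
  · obtain ⟨τ, hτ, rfl⟩ := List.mem_map.mp (List.mem_toFinset.mp he)
    exact (hcyc τ hτ).two_le_card_support
  obtain ⟨_, he, u, hu, v, hv, huv, hreach⟩ := hcycle.exists_reachable_erase
  obtain ⟨τ, hτ, rfl⟩ := List.mem_map.mp (List.mem_toFinset.mp he)
  have hdisj := movedSpace_inf_biSup_erase_eq_bot ℚ hprod
    (by rwa [List.map_reverse, List.sum_reverse]) (List.mem_reverse.mpr hτ)
  set S := ⨆ τ' ∈ l.reverse.erase τ, movedSpace ℚ τ'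
  have hrest : (Pi.single u 1 - Pi.single v 1 : Fin (n + 1) → ℚ) ∈ S := by
    refine hreach.sub_mem (fun x => Pi.single x 1) (S := S.toAddSubgroup) fun _ he' a ha b hb => ?_
    obtain ⟨hne, he'⟩ := Finset.mem_erase.mp he'
    obtain ⟨τ', hτ', rfl⟩ := List.mem_map.mp (List.mem_toFinset.mp he')
    have hτ'_erase : τ' ∈ l.reverse.erase τ :=
      (List.mem_erase_of_ne (by rintro rfl; exact hne rfl)).mpr (List.mem_reverse.mpr hτ')
    exact le_biSup (movedSpace ℚ) hτ'_erase
      ((hcyc τ' hτ').single_sub_single_mem_movedSpace ha hb)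
  have hne : (Pi.single u 1 - Pi.single v 1 : Fin (n + 1) → ℚ) ≠ 0 := fun h => by
    simpa [huv] using congrFun h u
  exact hne <| (Submodule.mem_bot ℚ).mp <| hdisj ▸
    ⟨(hcyc τ hτ).single_sub_single_mem_movedSpace hu hv, hrest⟩
end

section
/- For every pair τ < τ′ in the noncrossing partition lattice NCPart_{n+1}, the chains of length k from τ to τ′ are in bijection with the reduced factorizations σ₁σ₂⋯σ_k of the unique noncrossing permutation σ satisfying τσ = τ′; the chain τ = τ₀ < τ₁ < ⋯ < τ_k = τ′ corresponds to the factorization with τ₀σ₁⋯σᵢ = τᵢ for all i. -/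
/-- Absolute order on permutations: x ≤ y iff ℓ(x) + ℓ(x⁻¹y) = ℓ(y).
(Products are written in left-to-right order, so x⁻¹y is `y * x⁻¹` in Mathlib's convention.) -/
def AbsLe {α : Type*} [DecidableEq α] (x y : Equiv.Perm α) : Prop :=
  reflLen x + reflLen (y * x⁻¹) = reflLen y

/-- A noncrossing permutation of Fin (n+1): an element below the Coxeter element
c = finRotate (n+1) in absolute order, i.e. ℓ(σ) + ℓ(σ⁻¹c) = n. -/
def IsNC (n : ℕ) (σ : Equiv.Perm (Fin (n + 1))) : Prop :=
  reflLen σ + reflLen (finRotate (n + 1) * σ⁻¹) = n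

section Aux

lemma NC16.prefix_succ {G : Type*} [Group G] (l : List G) (i : ℕ) (h : i < l.length) :
    (l.take (i+1)).reverse.prod = l[i] * (l.take i).reverse.prod := by
  rw [List.take_succ, List.getElem?_eq_getElem h]
  simp only [Option.toList_some, List.reverse_append, List.reverse_singleton,
    List.prod_append, List.prod_singleton, List.reverse_cons, List.prod_cons,
    List.reverse_nil, List.nil_append, List.singleton_append]

lemma NC16.ofFn_prefix {G : Type*} [Group G] {k : ℕ} (g : Fin (k+1) → G) (i : ℕ) (hi : i ≤ k) :
    ((List.ofFn (fun j : Fin k => g j.succ * (g j.castSucc)⁻¹)).take i).reverse.prod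
      = g ⟨i, by omega⟩ * (g 0)⁻¹ := by
  induction i with
  | zero => simp
  | succ i ih =>
      rw [NC16.prefix_succ _ i (by simp; omega), ih (by omega)]
      simp only [List.getElem_ofFn]
      have h1 : (⟨i, by omega⟩ : Fin k).succ = ⟨i+1, by omega⟩ := rfl
      have h2 : (⟨i, by omega⟩ : Fin k).castSucc = ⟨i, by omega⟩ := rfl
      rw [h1, h2, mul_assoc, inv_mul_cancel_left]

lemma NC16.decomp {G : Type*} [Group G] (l : List G) (i : ℕ) :
    (l.drop i).reverse.prod * (l.take i).reverse.prod = l.reverse.prod := by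
  conv_rhs => rw [← List.take_append_drop i l]
  rw [List.reverse_append, List.prod_append]

variable {α : Type*} [DecidableEq α] [Fintype α]

lemma NC16.reflLen_set_nonempty (σ : Equiv.Perm α) :
    {k | ∃ l : List (Equiv.Perm α), l.prod = σ ∧ l.length = k ∧ ∀ t ∈ l, t.IsSwap}.Nonempty := by
  obtain ⟨l, hl, hsw⟩ := (Equiv.Perm.truncSwapFactors σ).out
  exact ⟨l.length, l, hl, rfl, hsw⟩

lemma NC16.reflLen_spec (σ : Equiv.Perm α) :
    ∃ l : List (Equiv.Perm α), l.prod = σ ∧ l.length = reflLen σ ∧ ∀ t ∈ l, t.IsSwap := by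
  have h := Nat.sInf_mem (NC16.reflLen_set_nonempty σ)
  exact h

omit [Fintype α] in
lemma NC16.reflLen_one : reflLen (1 : Equiv.Perm α) = 0 :=
  Nat.le_zero.mp (Nat.sInf_le ⟨[], by simp⟩)

lemma NC16.reflLen_mul_le (a b : Equiv.Perm α) :
    reflLen (a * b) ≤ reflLen a + reflLen b := by
  obtain ⟨la, hla, hlena, hswa⟩ := NC16.reflLen_spec a
  obtain ⟨lb, hlb, hlenb, hswb⟩ := NC16.reflLen_spec b
  refine Nat.sInf_le ⟨la ++ lb, ?_, by simp [hlena, hlenb], ?_⟩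
  · simp [hla, hlb]
  · intro t ht; rcases List.mem_append.mp ht with h | h
    exacts [hswa t h, hswb t h]

lemma NC16.reflLen_prod_le (L : List (Equiv.Perm α)) :
    reflLen L.prod ≤ (L.map reflLen).sum := by
  induction L with
  | nil => simp [NC16.reflLen_one]
  | cons a L ih =>
      simp only [List.prod_cons, List.map_cons, List.sum_cons]
      exact le_trans (NC16.reflLen_mul_le a L.prod) (by omega)

lemma NC16.reflLen_revprod_le (L : List (Equiv.Perm α)) :
    reflLen L.reverse.prod ≤ (L.map reflLen).sum := by
  have := NC16.reflLen_prod_le L.reverse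
  rwa [List.map_reverse, List.sum_reverse] at this

/-- The key squeeze: for a reduced factorization, prefix products have additive lengths. -/
lemma NC16.squeeze {τ τ' : Equiv.Perm α} (l : List (Equiv.Perm α))
    (hprod : l.reverse.prod = τ' * τ⁻¹)
    (hsum : (l.map reflLen).sum = reflLen (τ' * τ⁻¹))
    (hle : reflLen τ + reflLen (τ' * τ⁻¹) = reflLen τ') (i : ℕ) :
    reflLen ((l.take i).reverse.prod * τ)
      = reflLen τ + ((l.take i).map reflLen).sum := by
  set p := (l.take i).reverse.prod with hp
  set q := (l.drop i).reverse.prod with hq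
  have hqp : q * p = τ' * τ⁻¹ := by rw [hp, hq, NC16.decomp, hprod]
  have hS : ((l.take i).map reflLen).sum + ((l.drop i).map reflLen).sum
      = reflLen (τ' * τ⁻¹) := by
    rw [← hsum, ← List.sum_append, ← List.map_append, List.take_append_drop]
  have hup : reflLen p ≤ ((l.take i).map reflLen).sum := NC16.reflLen_revprod_le _
  have hqd : reflLen q ≤ ((l.drop i).map reflLen).sum := NC16.reflLen_revprod_le _
  have h1 : reflLen (p * τ) ≤ reflLen p + reflLen τ := NC16.reflLen_mul_le _ _
  have h2 : reflLen τ' ≤ reflLen q + reflLen (p * τ) := by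
    have hτ' : q * (p * τ) = τ' := by rw [← mul_assoc, hqp, inv_mul_cancel_right]
    calc reflLen τ' = reflLen (q * (p * τ)) := by rw [hτ']
    _ ≤ _ := NC16.reflLen_mul_le _ _
  omega

end Aux

/-- For τ < τ′ in the noncrossing partition lattice, the chains of length k from τ to τ′
are in bijection with the reduced factorizations σ₁σ₂⋯σ_k of the unique σ with τσ = τ′,
the chain corresponding to a factorization by τᵢ = τσ₁⋯σᵢ.  (Products are taken in the
left-to-right order, so τσ₁⋯σᵢ is `(σᵢ * ⋯ * σ₁) * τ` in Mathlib's convention.) -/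
theorem stmt16 (n k : ℕ) (τ τ' : Equiv.Perm (Fin (n + 1)))
    (hτ : IsNC n τ) (hτ' : IsNC n τ') (hle : AbsLe τ τ') (hne : τ ≠ τ') :
    ∃ e : {l : List (Equiv.Perm (Fin (n + 1))) // l.length = k ∧
            l.reverse.prod = τ' * τ⁻¹ ∧ (∀ x ∈ l, x ≠ 1) ∧
            (l.map reflLen).sum = reflLen (τ' * τ⁻¹)} ≃
          {g : Fin (k + 1) → Equiv.Perm (Fin (n + 1)) //
            g 0 = τ ∧ g (Fin.last k) = τ' ∧ (∀ i, IsNC n (g i)) ∧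
            ∀ i : Fin k, AbsLe (g i.castSucc) (g i.succ) ∧ g i.castSucc ≠ g i.succ},
      ∀ (l : {l : List (Equiv.Perm (Fin (n + 1))) // l.length = k ∧
            l.reverse.prod = τ' * τ⁻¹ ∧ (∀ x ∈ l, x ≠ 1) ∧
            (l.map reflLen).sum = reflLen (τ' * τ⁻¹)}) (i : Fin (k + 1)),
        (e l).1 i = ((l.1.take i).reverse.prod) * τ := by
  classical
  set c : Equiv.Perm (Fin (n+1)) := finRotate (n+1) with hc
  -- forward map properties
  have fwd : ∀ l : List (Equiv.Perm (Fin (n+1))), l.length = k →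
      l.reverse.prod = τ' * τ⁻¹ → (∀ x ∈ l, x ≠ 1) →
      (l.map reflLen).sum = reflLen (τ' * τ⁻¹) →
      (fun i : Fin (k+1) => (l.take i).reverse.prod * τ) 0 = τ ∧
      (fun i : Fin (k+1) => (l.take i).reverse.prod * τ) (Fin.last k) = τ' ∧
      (∀ i, IsNC n ((fun i : Fin (k+1) => (l.take i).reverse.prod * τ) i)) ∧
      ∀ i : Fin k, AbsLe ((l.take (i:ℕ)).reverse.prod * τ)
          ((l.take ((i:ℕ)+1)).reverse.prod * τ) ∧
          (l.take (i:ℕ)).reverse.prod * τ ≠ (l.take ((i:ℕ)+1)).reverse.prod * τ := by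
    intro l hlen hprod hne1 hsum
    have hsq := NC16.squeeze l hprod hsum hle
    refine ⟨by simp, ?_, ?_, ?_⟩
    · show (l.take (k:ℕ)).reverse.prod * τ = τ'
      rw [← hlen, List.take_length, hprod, inv_mul_cancel_right]
    · -- IsNC
      intro i
      show IsNC n ((l.take (i:ℕ)).reverse.prod * τ)
      have e1 := hsq (i:ℕ)
      set p := (l.take (i:ℕ)).reverse.prod with hp
      set q := (l.drop (i:ℕ)).reverse.prod with hq
      have hqp : q * p = τ' * τ⁻¹ := by rw [hp, hq, NC16.decomp, hprod]
      have hS : ((l.take (i:ℕ)).map reflLen).sum + ((l.drop (i:ℕ)).map reflLen).sum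
          = reflLen (τ' * τ⁻¹) := by
        rw [← hsum, ← List.sum_append, ← List.map_append, List.take_append_drop]
      have hup : reflLen p ≤ ((l.take (i:ℕ)).map reflLen).sum := NC16.reflLen_revprod_le _
      have hqd : reflLen q ≤ ((l.drop (i:ℕ)).map reflLen).sum := NC16.reflLen_revprod_le _
      -- lower bound
      have hlow : n ≤ reflLen (p * τ) + reflLen (c * (p * τ)⁻¹) := by
        have hdec : (c * (p * τ)⁻¹) * p = c * τ⁻¹ := by
          rw [mul_inv_rev, mul_assoc, mul_assoc, inv_mul_cancel, mul_one]
        have h3 : reflLen (c * τ⁻¹) ≤ reflLen (c * (p * τ)⁻¹) + reflLen p := by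
          rw [← hdec]; exact NC16.reflLen_mul_le _ _
        have h5 := hτ
        unfold IsNC at h5
        rw [← hc] at h5
        omega
      -- upper bound
      have hhigh : reflLen (p * τ) + reflLen (c * (p * τ)⁻¹) ≤ n := by
        have heq : q = (τ' * τ⁻¹) * p⁻¹ := by rw [← hqp, mul_inv_cancel_right]
        have hdec : (c * τ'⁻¹) * q = c * (p * τ)⁻¹ := by
          rw [heq]; group
        have h3 : reflLen (c * (p * τ)⁻¹) ≤ reflLen (c * τ'⁻¹) + reflLen q := by
          rw [← hdec]; exact NC16.reflLen_mul_le _ _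
        have h4 := hτ'
        unfold IsNC at h4
        rw [← hc] at h4
        unfold AbsLe at hle
        omega
      unfold IsNC
      rw [← hc]
      omega
    · -- AbsLe and ne
      intro i
      have hi : (i:ℕ) < l.length := by omega
      have hstep : (l.take ((i:ℕ)+1)).reverse.prod
          = l[(i:ℕ)] * (l.take (i:ℕ)).reverse.prod := NC16.prefix_succ l i hi
      constructor
      · unfold AbsLe
        have hmid : (l.take ((i:ℕ)+1)).reverse.prod * τ * ((l.take (i:ℕ)).reverse.prod * τ)⁻¹
            = l[(i:ℕ)] := by
          rw [hstep]; group
        rw [hmid, hsq (i:ℕ), hsq ((i:ℕ)+1)]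
        have hlt2 : (i:ℕ) < (l.map reflLen).length := by rw [List.length_map, hlen]; exact i.isLt
        have hts := List.sum_take_succ (l.map reflLen) (i:ℕ) hlt2
        rw [List.getElem_map] at hts
        rw [← List.map_take, ← List.map_take] at hts
        omega
      · intro hcon
        have hone : l[(i:ℕ)] = 1 := by
          have h5 := mul_right_cancel hcon
          rw [hstep] at h5
          exact mul_right_cancel (by rw [← h5, one_mul])
        exact hne1 _ (List.getElem_mem hi) hone
  -- backwards telescope for lengths
  have bwd : ∀ g : Fin (k+1) → Equiv.Perm (Fin (n+1)),
      (∀ i : Fin k, AbsLe (g i.castSucc) (g i.succ)) →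
      ∀ i : Fin (k+1),
      reflLen (g i) = reflLen (g 0) +
        (((List.ofFn (fun j : Fin k => g j.succ * (g j.castSucc)⁻¹)).map reflLen).take (i:ℕ)).sum := by
    intro g hstep i
    induction i using Fin.induction with
    | zero => simp
    | succ i ih =>
        have hlt : (i:ℕ) < ((List.ofFn (fun j : Fin k => g j.succ * (g j.castSucc)⁻¹)).map reflLen).length := by
          rw [List.length_map, List.length_ofFn]; exact i.isLt
        rw [Fin.val_succ, List.sum_take_succ _ _ hlt, ← Nat.add_assoc]
        have hcs : ((i.castSucc : Fin (k+1)) : ℕ) = (i:ℕ) := rfl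
        rw [hcs] at ih
        rw [← ih]
        have hget : ((List.ofFn (fun j : Fin k => g j.succ * (g j.castSucc)⁻¹)).map reflLen)[(i:ℕ)]
            = reflLen (g i.succ * (g i.castSucc)⁻¹) := by
          simp
        rw [hget]
        have habs := hstep i
        unfold AbsLe at habs
        omega
  exact ⟨{
    toFun := fun l => ⟨fun i : Fin (k+1) => (l.1.take (i:ℕ)).reverse.prod * τ, by
      obtain ⟨hlen, hprod, hne1, hsum⟩ := l.2
      exact fwd l.1 hlen hprod hne1 hsum⟩
    invFun := fun g => ⟨List.ofFn (fun j : Fin k => g.1 j.succ * (g.1 j.castSucc)⁻¹), by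
      simp, by
      -- reverse product
      obtain ⟨h0, hlast, hnc, hstep⟩ := g.2
      have hfull := NC16.ofFn_prefix g.1 k le_rfl
      rw [List.take_of_length_le (by simp)] at hfull
      rw [hfull, h0]
      have hgk : g.1 ⟨k, by omega⟩ = τ' := hlast
      rw [hgk], by
      -- non-identity
      intro x hx
      rw [List.mem_ofFn] at hx
      obtain ⟨j, hj⟩ := hx
      subst hj
      intro h1
      exact (g.2.2.2.2 j).2 (mul_inv_eq_one.mp h1).symm, by
      -- sum of lengths
      obtain ⟨h0, hlast, hnc, hstep⟩ := g.2
      have hb := bwd g.1 (fun i => (hstep i).1) (Fin.last k)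
      rw [List.take_of_length_le (by simp [Fin.val_last])] at hb
      rw [hlast, h0] at hb
      unfold AbsLe at hle
      omega⟩
    left_inv := by
      intro l
      apply Subtype.ext
      show List.ofFn (fun j : Fin k =>
          ((l.1.take ((j.succ : Fin (k+1)) : ℕ)).reverse.prod * τ) *
          (((l.1.take ((j.castSucc : Fin (k+1)) : ℕ)).reverse.prod * τ))⁻¹) = l.1
      apply List.ext_getElem (by simp [l.2.1])
      intro i h1 h2
      have hi : i < l.1.length := h2
      have hik : i < k := by
        have hL := l.2.1
        omega
      simp only [List.getElem_ofFn]
      show (l.1.take (((⟨i, hik⟩ : Fin k).succ : Fin (k+1)) : ℕ)).reverse.prod * τ *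
          ((l.1.take (((⟨i, hik⟩ : Fin k).castSucc : Fin (k+1)) : ℕ)).reverse.prod * τ)⁻¹ = l.1[i]
      have hcs : (((⟨i, hik⟩ : Fin k).succ : Fin (k+1)) : ℕ) = i + 1 := rfl
      have hcc : (((⟨i, hik⟩ : Fin k).castSucc : Fin (k+1)) : ℕ) = i := rfl
      rw [hcs, hcc, NC16.prefix_succ l.1 i hi]
      group
    right_inv := by
      intro g
      apply Subtype.ext
      funext i
      show ((List.ofFn (fun j : Fin k => g.1 j.succ * (g.1 j.castSucc)⁻¹)).take (i:ℕ)).reverse.prod * τ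
          = g.1 i
      rw [NC16.ofFn_prefix g.1 (i:ℕ) i.is_le, g.2.1, inv_mul_cancel_right] }, fun l i => rfl⟩
end
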